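/- arXiv:math/9204239 — 3 statements merged into one kernel-verified Lean document; each statement's English description precedes it below -/
import Mathlib

section
/- For the function u(x) = (1 - e^{-|x|})/|x| on ℝ³ (extended by u(0)=1), we have sup_{ℝ³} |u| = 1, ∫_{ℝ³} |∇u|² dx = 2π, and ∫_{ℝ³} |Δu|² dx = 2π; hence equality holds in sup|u| = (2π)^{-1/2} ‖∇u‖^{1/2} ‖Δu‖^{1/2}. -/
open MeasureTheory Filter Classical

noncomputable section

abbrev E3 := EuclideanSpace ℝ (Fin 3)

/-- The (classical) Laplacian of a function on `ℝ³`. -/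
def lap (u : E3 → ℝ) (x : E3) : ℝ :=
  ∑ i : Fin 3, fderiv ℝ (fun y => fderiv ℝ u y (EuclideanSpace.single i 1)) x
    (EuclideanSpace.single i 1)

/-- The extremal function `u(x) = (1 - e^{-|x|})/|x|`, extended by `u(0) = 1`. -/

def uext (x : E3) : ℝ :=
  if x = 0 then 1 else (1 - Real.exp (-‖x‖)) / ‖x‖

section Aux

open Real Set


/-- radial profile derivative helpers -/
def psi (s : ℝ) : ℝ := (1 - Real.exp (-Real.sqrt s)) / Real.sqrt s
def psid (s : ℝ) : ℝ :=
  ((1 + Real.sqrt s) * Real.exp (-Real.sqrt s) - 1) / (2 * s * Real.sqrt s)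
def psidd (s : ℝ) : ℝ :=
  (3 - (s + 3 * Real.sqrt s + 3) * Real.exp (-Real.sqrt s)) / (4 * s ^ 2 * Real.sqrt s)

lemma hasDerivAt_psi {s : ℝ} (hs : 0 < s) : HasDerivAt psi (psid s) s := by
  have hr : 0 < Real.sqrt s := Real.sqrt_pos.2 hs
  have hsq : HasDerivAt Real.sqrt (1 / (2 * Real.sqrt s)) s := Real.hasDerivAt_sqrt hs.ne'
  have hf : HasDerivAt (fun r : ℝ => (1 - Real.exp (-r)) / r)
      ((Real.exp (-(Real.sqrt s)) * Real.sqrt s - (1 - Real.exp (-(Real.sqrt s)))) /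
        (Real.sqrt s) ^ 2) (Real.sqrt s) := by
    have h1 : HasDerivAt (fun r : ℝ => 1 - Real.exp (-r)) (Real.exp (-(Real.sqrt s)))
        (Real.sqrt s) := by
      simpa using ((Real.hasDerivAt_exp _).comp _ (hasDerivAt_neg _)).const_sub 1
    have := h1.div (hasDerivAt_id' _) hr.ne'
    simp only [mul_one] at this
    exact this
  have := hf.comp s hsq
  refine this.congr_deriv ?_
  have h2 : Real.sqrt s ^ 2 = s := Real.sq_sqrt hs.le
  rw [psid, ← h2, Real.sqrt_sq hr.le]
  ring

lemma hasDerivAt_psid {s : ℝ} (hs : 0 < s) : HasDerivAt psid (psidd s) s := by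
  have hr : 0 < Real.sqrt s := Real.sqrt_pos.2 hs
  have hsq : HasDerivAt Real.sqrt (1 / (2 * Real.sqrt s)) s := Real.hasDerivAt_sqrt hs.ne'
  set g : ℝ → ℝ := fun r => ((1 + r) * Real.exp (-r) - 1) / (2 * r ^ 3) with hg
  have h1 : HasDerivAt (fun r : ℝ => (1 + r) * Real.exp (-r) - 1)
      (-(Real.sqrt s) * Real.exp (-(Real.sqrt s))) (Real.sqrt s) := by
    have he : HasDerivAt (fun r : ℝ => Real.exp (-r)) (-Real.exp (-(Real.sqrt s)))
        (Real.sqrt s) := by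
      simpa [Function.comp_def] using (Real.hasDerivAt_exp _).comp _ (hasDerivAt_neg (Real.sqrt s))
    have := (((hasDerivAt_id (Real.sqrt s)).const_add 1).mul he).sub_const 1
    refine this.congr_deriv ?_
    simp only [id_eq]; ring
  have h2 : HasDerivAt (fun r : ℝ => 2 * r ^ 3) (6 * (Real.sqrt s) ^ 2) (Real.sqrt s) := by
    have := (hasDerivAt_pow 3 (Real.sqrt s)).const_mul 2
    refine this.congr_deriv ?_
    norm_num; ring
  have hf := h1.div h2 (by positivity)
  have hcomp := hf.comp s hsq
  have heq : psid =ᶠ[nhds s] (g ∘ Real.sqrt) := by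
    filter_upwards [eventually_gt_nhds hs] with t ht
    have h2 : Real.sqrt t ^ 2 = t := Real.sq_sqrt ht.le
    have h3 : 2 * t * Real.sqrt t = 2 * Real.sqrt t ^ 3 := by
      rw [pow_succ, h2]; ring
    simp only [psid, Function.comp, hg, h3]
  refine (hcomp.congr_of_eventuallyEq heq).congr_deriv ?_
  simp only [psidd]
  set r := Real.sqrt s with hr'
  have hs2 : s = r ^ 2 := (Real.sq_sqrt hs.le).symm
  rw [hs2]
  have hr0 : 0 < r := hr
  field_simp
  ring


lemma uext_eq {y : E3} (hy : y ≠ 0) : uext y = psi (‖y‖ ^ 2) := by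
  rw [uext, if_neg hy, psi, Real.sqrt_sq (norm_nonneg y)]

lemma hasFDerivAt_uext {x : E3} (hx : x ≠ 0) :
    HasFDerivAt uext ((psid (‖x‖ ^ 2)) • (2 • (innerSL ℝ x))) x := by
  have hx' : ‖x‖ ≠ 0 := norm_ne_zero_iff.2 hx
  have hs : (0:ℝ) < ‖x‖ ^ 2 := by positivity
  have hq : HasFDerivAt (fun y : E3 => ‖y‖ ^ 2) (2 • (innerSL ℝ x)) x :=
    (hasStrictFDerivAt_norm_sq x).hasFDerivAt
  have hcomp := (hasDerivAt_psi hs).comp_hasFDerivAt x hq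
  refine hcomp.congr_of_eventuallyEq ?_
  filter_upwards [isOpen_compl_singleton.eventually_mem hx] with y hy
  exact uext_eq hy

lemma hasGradientAt_uext {x : E3} (hx : x ≠ 0) :
    HasGradientAt uext ((2 * psid (‖x‖ ^ 2)) • x) x := by
  rw [hasGradientAt_iff_hasFDerivAt]
  refine (hasFDerivAt_uext hx).congr_fderiv ?_
  ext v
  simp [InnerProductSpace.toDual_apply_apply, inner_smul_left, real_inner_comm]
  ring

lemma gradient_uext {x : E3} (hx : x ≠ 0) :
    gradient uext x = (2 * psid (‖x‖ ^ 2)) • x := (hasGradientAt_uext hx).gradient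

lemma fderiv_uext_apply {y : E3} (hy : y ≠ 0) (i : Fin 3) :
    fderiv ℝ uext y (EuclideanSpace.single i 1) = 2 * psid (‖y‖ ^ 2) * y i := by
  rw [(hasFDerivAt_uext hy).fderiv]
  simp [EuclideanSpace.inner_single_right, real_inner_comm]
  ring

lemma norm_sq_eq_sum (x : E3) : ‖x‖ ^ 2 = ∑ i : Fin 3, (x i) ^ 2 := by
  rw [← real_inner_self_eq_norm_sq]
  simp [PiLp.inner_apply, RCLike.inner_apply, sq]
  rw [← sq, EuclideanSpace.norm_eq, Real.sq_sqrt (Finset.sum_nonneg fun i _ => sq_nonneg _)]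
  simp [sq]

lemma lap_uext {x : E3} (hx : x ≠ 0) :
    lap uext x = 4 * psidd (‖x‖ ^ 2) * ‖x‖ ^ 2 + 6 * psid (‖x‖ ^ 2) := by
  have hx' : ‖x‖ ≠ 0 := norm_ne_zero_iff.2 hx
  have hs : (0:ℝ) < ‖x‖ ^ 2 := by positivity
  have hq : HasFDerivAt (fun y : E3 => ‖y‖ ^ 2) (2 • (innerSL ℝ x)) x :=
    (hasStrictFDerivAt_norm_sq x).hasFDerivAt
  have key : ∀ i : Fin 3,
      fderiv ℝ (fun y => fderiv ℝ uext y (EuclideanSpace.single i 1)) x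
        (EuclideanSpace.single i 1) = 4 * psidd (‖x‖ ^ 2) * (x i) ^ 2 + 2 * psid (‖x‖ ^ 2) := by
    intro i
    have heq : (fun y => fderiv ℝ uext y (EuclideanSpace.single i 1)) =ᶠ[nhds x]
        (fun y => 2 * psid (‖y‖ ^ 2) * y i) := by
      filter_upwards [isOpen_compl_singleton.eventually_mem hx] with y hy
      exact fderiv_uext_apply hy i
    rw [heq.fderiv_eq]
    have h1 : HasFDerivAt (fun y : E3 => psid (‖y‖ ^ 2))
        (psidd (‖x‖ ^ 2) • (2 • innerSL ℝ x)) x :=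
      by have := (hasDerivAt_psid hs).comp_hasFDerivAt x hq; exact this
    have h2 : HasFDerivAt (fun y : E3 => y i) (EuclideanSpace.proj (𝕜 := ℝ) i) x :=
      (EuclideanSpace.proj (𝕜 := ℝ) i).hasFDerivAt
    have h3 := (h1.const_mul (2:ℝ)).mul h2
    rw [show (fun y : E3 => 2 * psid (‖y‖ ^ 2) * y i) = ((fun y => 2 * psid (‖y‖ ^ 2)) * fun y => y i) from rfl, h3.fderiv]
    simp [EuclideanSpace.inner_single_right, EuclideanSpace.single_apply, real_inner_comm]
    ring
  rw [lap]
  simp only [key]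
  rw [Finset.sum_add_distrib]
  simp [← Finset.mul_sum, ← norm_sq_eq_sum]
  ring


/-- h r = (1+r) e^{-r} - 1 -/
def hh (r : ℝ) : ℝ := (1 + r) * Real.exp (-r) - 1

lemma hasDerivAt_hh (r : ℝ) : HasDerivAt hh (-r * Real.exp (-r)) r := by
  have he : HasDerivAt (fun t : ℝ => Real.exp (-t)) (-Real.exp (-r)) r := by
    simpa [Function.comp_def] using (Real.hasDerivAt_exp _).comp _ (hasDerivAt_neg r)
  have := (((hasDerivAt_id r).const_add 1).mul he).sub_const 1
  refine this.congr_deriv ?_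
  simp only [id_eq]; ring

lemma hh_tendsto : Tendsto hh atTop (nhds (-1)) := by
  have h1 : Tendsto (fun r : ℝ => (1 + r) * Real.exp (-r)) atTop (nhds 0) := by
    have := (tendsto_exp_neg_atTop_nhds_zero.add (tendsto_pow_mul_exp_neg_atTop_nhds_zero 1))
    simp only [pow_one] at this
    convert this using 2 with r
    · ring
    · norm_num
  have := h1.sub_const 1
  show Tendsto (fun r => (1 + r) * Real.exp (-r) - 1) atTop (nhds (-1))
  simpa using this

def FF (r : ℝ) : ℝ := -(hh r) ^ 2 / r + ((2 * r + 3) * Real.exp (-(2 * r)) / 2 - 2 * Real.exp (-r))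

lemma exp_two (r : ℝ) : Real.exp (-(2 * r)) = Real.exp (-r) ^ 2 := by
  rw [show -(2 * r) = (2:ℕ) * (-r) by ring, Real.exp_nat_mul]

lemma hasDerivAt_FF {r : ℝ} (hr : 0 < r) : HasDerivAt FF (hh r ^ 2 / r ^ 2) r := by
  have he : HasDerivAt (fun t : ℝ => Real.exp (-t)) (-Real.exp (-r)) r := by
    simpa [Function.comp_def] using (Real.hasDerivAt_exp _).comp _ (hasDerivAt_neg r)
  have he2 : HasDerivAt (fun t : ℝ => Real.exp (-(2 * t))) (-2 * Real.exp (-(2 * r))) r := by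
    have := (Real.hasDerivAt_exp (-(2*r))).comp r (((hasDerivAt_id r).const_mul 2).neg)
    refine this.congr_deriv ?_
    ring
  have h1 : HasDerivAt (fun t => -(hh t) ^ 2 / t)
      ((-(2 * hh r * (-r * Real.exp (-r))) * r - -(hh r) ^ 2 * 1) / r ^ 2) r := by
    have hnum : HasDerivAt (fun t => -(hh t) ^ 2) (-(2 * hh r * (-r * Real.exp (-r)))) r := by
      have := ((hasDerivAt_hh r).pow 2).neg
      refine this.congr_deriv ?_
      norm_num
    exact hnum.div (hasDerivAt_id r) hr.ne'
  have h2 : HasDerivAt (fun t => (2 * t + 3) * Real.exp (-(2 * t)) / 2 - 2 * Real.exp (-t))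
      ((2 * Real.exp (-(2 * r)) + (2 * r + 3) * (-2 * Real.exp (-(2 * r)))) / 2
        - 2 * -Real.exp (-r)) r := by
    have hp : HasDerivAt (fun t : ℝ => (2 * t + 3)) 2 r := by
      simpa using ((hasDerivAt_id r).const_mul 2).add_const 3
    exact ((hp.mul he2).div_const 2).sub (he.const_mul 2)
  have := h1.add h2
  refine this.congr_deriv ?_
  have hE2 := exp_two r
  simp only [hh, hE2]
  field_simp
  ring

lemma FF_tendsto : Tendsto FF atTop (nhds 0) := by
  have h1 : Tendsto (fun r : ℝ => -(hh r) ^ 2 / r) atTop (nhds 0) := by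
    have := ((hh_tendsto.pow 2).neg.mul tendsto_inv_atTop_zero)
    simp only [div_eq_mul_inv]
    simpa using this
  have hexp : Tendsto (fun r : ℝ => Real.exp (-r)) atTop (nhds 0) :=
    tendsto_exp_neg_atTop_nhds_zero
  have hre : Tendsto (fun r : ℝ => r * Real.exp (-r)) atTop (nhds 0) := by
    simpa using tendsto_pow_mul_exp_neg_atTop_nhds_zero 1
  have h2 : Tendsto (fun r : ℝ => (2 * r + 3) * Real.exp (-(2 * r)) / 2 - 2 * Real.exp (-r))
      atTop (nhds 0) := by
    have : Tendsto (fun r : ℝ => (2 * (r * Real.exp (-r)) * Real.exp (-r)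
        + 3 * (Real.exp (-r) * Real.exp (-r))) / 2 - 2 * Real.exp (-r)) atTop (nhds 0) := by
      have := ((((hre.const_mul 2).mul hexp).add ((hexp.mul hexp).const_mul 3)).div_const 2).sub
        (hexp.const_mul 2)
      simpa using this
    convert this using 2 with r
    rw [exp_two]
    ring
  show Tendsto (fun r => -(hh r) ^ 2 / r + ((2 * r + 3) * Real.exp (-(2 * r)) / 2 - 2 * Real.exp (-r))) atTop (nhds 0)
  simpa using h1.add h2

lemma FF_contWithin : ContinuousWithinAt FF (Ici (0:ℝ)) 0 := by
  rw [← continuousWithinAt_Ioi_iff_Ici]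
  have hslope : Tendsto (fun r : ℝ => hh r / r) (nhdsWithin 0 (Ioi 0)) (nhds 0) := by
    have h0 : HasDerivAt hh 0 0 := by simpa using hasDerivAt_hh 0
    have := hasDerivAt_iff_tendsto_slope.1 h0
    have h2 := this.mono_left (nhdsWithin_mono 0 (by intro r hr; exact ne_of_gt hr))
    refine h2.congr ?_
    intro r
    simp [slope_def_field, hh]
  have hid : Tendsto (fun r : ℝ => r) (nhdsWithin 0 (Ioi 0)) (nhds 0) :=
    tendsto_id.mono_left nhdsWithin_le_nhds
  have T1 : Tendsto (fun r : ℝ => -(hh r) ^ 2 / r) (nhdsWithin 0 (Ioi 0)) (nhds 0) := by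
    have := ((hslope.pow 2).mul hid).neg
    rw [show -((0:ℝ)^2 * 0) = 0 by ring] at this
    refine this.congr' ?_
    filter_upwards [self_mem_nhdsWithin] with r hr
    have hr0 : r ≠ 0 := ne_of_gt hr
    field_simp
  have Tc : ContinuousWithinAt
      (fun r : ℝ => (2 * r + 3) * Real.exp (-(2 * r)) / 2 - 2 * Real.exp (-r)) (Ioi 0) 0 := by
    apply Continuous.continuousWithinAt
    fun_prop
  have := T1.add Tc
  unfold ContinuousWithinAt
  convert this using 2
  all_goals simp [FF, hh]

lemma FF_nonneg : ∀ r ∈ Ioi (0:ℝ), 0 ≤ hh r ^ 2 / r ^ 2 := by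
  intro r _; positivity

lemma I1 : ∫ r in Ioi (0:ℝ), hh r ^ 2 / r ^ 2 = 1 / 2 := by
  rw [integral_Ioi_of_hasDerivAt_of_nonneg FF_contWithin
    (fun x hx => hasDerivAt_FF hx) FF_nonneg FF_tendsto]
  simp [FF, hh]
  norm_num

lemma I2 : ∫ r in Ioi (0:ℝ), Real.exp (-(2 * r)) = 1 / 2 := by
  have hcont : ContinuousWithinAt (fun r : ℝ => -Real.exp (-(2 * r)) / 2) (Ici 0) 0 := by
    apply Continuous.continuousWithinAt; fun_prop
  have hderiv : ∀ x ∈ Ioi (0:ℝ),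
      HasDerivAt (fun r : ℝ => -Real.exp (-(2 * r)) / 2) (Real.exp (-(2 * x))) x := by
    intro x _
    have := (Real.hasDerivAt_exp (-(2*x))).comp x (((hasDerivAt_id x).const_mul 2).neg)
    have h2 := this.neg.div_const 2
    refine h2.congr_deriv ?_
    ring
  have htop : Tendsto (fun r : ℝ => -Real.exp (-(2 * r)) / 2) atTop (nhds 0) := by
    have : Tendsto (fun r : ℝ => Real.exp (-(2 * r))) atTop (nhds 0) := by
      have h2t : Tendsto (fun r : ℝ => 2 * r) atTop atTop :=
        Tendsto.const_mul_atTop (by norm_num : (0:ℝ) < 2) tendsto_id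
      have := tendsto_exp_neg_atTop_nhds_zero.comp h2t
      simpa [Function.comp_def] using this
    simpa using this.neg.div_const 2
  rw [integral_Ioi_of_hasDerivAt_of_nonneg hcont hderiv (fun r _ => (Real.exp_pos _).le) htop]
  norm_num


lemma vol_ball3 : (volume (Metric.ball (0:E3) 1)).toReal = 4 * π / 3 := by
  rw [EuclideanSpace.volume_ball]
  have hcard : (Fintype.card (Fin 3)) = 3 := by simp
  rw [hcard]
  have hG : Real.Gamma ((3:ℝ) / 2 + 1) = 3 / 4 * Real.sqrt π := by
    rw [Real.Gamma_add_one (by norm_num)]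
    have h32 : (3:ℝ)/2 = 1/2 + 1 := by norm_num
    rw [h32, Real.Gamma_add_one (by norm_num), Real.Gamma_one_half_eq]
    ring
  have hs : Real.sqrt π ≠ 0 := by
    positivity
  have hA : Real.sqrt π ^ 3 / Real.Gamma ((3:ℝ)/2 + 1) = 4 * π / 3 := by
    rw [hG]
    have : Real.sqrt π ^ 3 = π * Real.sqrt π := by
      rw [pow_succ, Real.sq_sqrt pi_pos.le]
    rw [this]
    field_simp
  push_cast
  rw [ENNReal.ofReal_one, one_pow, one_mul, ENNReal.toReal_ofReal (by positivity), hA]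

lemma radial3 (f : ℝ → ℝ) :
    ∫ x : E3, f ‖x‖ = 4 * π * ∫ r in Ioi (0:ℝ), r ^ 2 * f r := by
  rw [MeasureTheory.integral_fun_norm_addHaar (volume : Measure E3) f]
  have hdim : Module.finrank ℝ E3 = 3 := by simp
  rw [hdim, measureReal_def, vol_ball3]
  rw [nsmul_eq_mul, smul_eq_mul]
  norm_num
  ring

def Gf (r : ℝ) : ℝ := (2 * psid (r ^ 2)) ^ 2 * r ^ 2
def Lf (r : ℝ) : ℝ := (4 * psidd (r ^ 2) * r ^ 2 + 6 * psid (r ^ 2)) ^ 2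

lemma psid_rsq {r : ℝ} (hr : 0 < r) : psid (r ^ 2) = hh r / (2 * r ^ 3) := by
  simp only [psid, Real.sqrt_sq hr.le, hh]
  ring_nf

lemma psidd_rsq {r : ℝ} (hr : 0 < r) :
    psidd (r ^ 2) = (3 - (r ^ 2 + 3 * r + 3) * Real.exp (-r)) / (4 * r ^ 5) := by
  simp only [psidd, Real.sqrt_sq hr.le]
  ring_nf

lemma grad_integrand {x : E3} (hx : x ≠ 0) : ‖gradient uext x‖ ^ 2 = Gf ‖x‖ := by
  rw [gradient_uext hx, Gf, norm_smul]
  rw [mul_pow, Real.norm_eq_abs, sq_abs]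

lemma lap_integrand {x : E3} (hx : x ≠ 0) : (lap uext x) ^ 2 = Lf ‖x‖ := by
  rw [lap_uext hx, Lf]

lemma grad_radial {r : ℝ} (hr : r ∈ Ioi (0:ℝ)) : r ^ 2 * Gf r = hh r ^ 2 / r ^ 2 := by
  have hr0 : (0:ℝ) < r := hr
  rw [Gf, psid_rsq hr0]
  field_simp

lemma lap_radial {r : ℝ} (hr : r ∈ Ioi (0:ℝ)) : r ^ 2 * Lf r = Real.exp (-(2 * r)) := by
  have hr0 : (0:ℝ) < r := hr
  have hval : 4 * psidd (r ^ 2) * r ^ 2 + 6 * psid (r ^ 2) = -(Real.exp (-r)) / r := by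
    rw [psid_rsq hr0, psidd_rsq hr0, hh]
    field_simp
    ring
  rw [Lf, hval, exp_two]
  field_simp

lemma ae_ne_zero : ∀ᵐ x : E3, x ≠ 0 := by
  have h0 : volume ({(0:E3)} : Set E3) = 0 := measure_singleton 0
  exact compl_mem_ae_iff.2 h0

lemma integral_grad : (∫ x : E3, ‖gradient uext x‖ ^ 2) = 2 * π := by
  have hae : (fun x : E3 => ‖gradient uext x‖ ^ 2) =ᵐ[volume] fun x => Gf ‖x‖ := by
    filter_upwards [ae_ne_zero] with x hx
    exact grad_integrand hx
  rw [integral_congr_ae hae, radial3]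
  rw [setIntegral_congr_fun measurableSet_Ioi fun r hr => grad_radial hr, I1]
  ring

lemma integral_lap : (∫ x : E3, (lap uext x) ^ 2) = 2 * π := by
  have hae : (fun x : E3 => (lap uext x) ^ 2) =ᵐ[volume] fun x => Lf ‖x‖ := by
    filter_upwards [ae_ne_zero] with x hx
    exact lap_integrand hx
  rw [integral_congr_ae hae, radial3]
  rw [setIntegral_congr_fun measurableSet_Ioi fun r hr => lap_radial hr, I2]
  ring

lemma uext_abs_le (x : E3) : |uext x| ≤ 1 := by
  by_cases hx : x = 0
  · simp [uext, hx]
  · have hr : (0:ℝ) < ‖x‖ := norm_pos_iff.2 hx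
    rw [uext, if_neg hx]
    have he1 : Real.exp (-‖x‖) ≤ 1 := Real.exp_le_one_iff.mpr (by linarith)
    have he2 : 1 - ‖x‖ ≤ Real.exp (-‖x‖) := by
      have := Real.add_one_le_exp (-‖x‖)
      linarith
    rw [abs_of_nonneg (div_nonneg (by linarith) hr.le)]
    rw [div_le_one hr]
    linarith

lemma sup_uext : (⨆ x : E3, |uext x|) = 1 := by
  apply le_antisymm
  · exact ciSup_le uext_abs_le
  · have h0 : |uext 0| = 1 := by simp [uext]
    rw [← h0]
    have hbdd : BddAbove (Set.range fun x : E3 => |uext x|) := by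
      refine ⟨1, ?_⟩
      rintro y ⟨z, rfl⟩
      exact uext_abs_le z
    exact le_ciSup hbdd 0

end Aux

theorem extremal_function_equality :
    (⨆ x : E3, |uext x|) = 1 ∧
    (∫ x, ‖gradient uext x‖ ^ 2) = 2 * Real.pi ∧
    (∫ x, (lap uext x) ^ 2) = 2 * Real.pi ∧
    (⨆ x : E3, |uext x|) = (Real.sqrt (2 * Real.pi))⁻¹ *
      ((∫ x, ‖gradient uext x‖ ^ 2) ^ ((1 : ℝ)/4) *
        (∫ x, (lap uext x) ^ 2) ^ ((1 : ℝ)/4)) := by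
  have hπ : (0:ℝ) < 2 * Real.pi := by positivity
  refine ⟨sup_uext, integral_grad, integral_lap, ?_⟩
  rw [sup_uext, integral_grad, integral_lap]
  rw [← Real.rpow_add hπ]
  have h14 : (1:ℝ)/4 + 1/4 = 1/2 := by norm_num
  rw [h14, Real.sqrt_eq_rpow, inv_mul_cancel₀ (ne_of_gt (Real.rpow_pos_of_pos hπ _))]
end
end

section
/- Let λ₁,…,λ_m > 0, let a₁,…,a_m ∈ ℝ, and let μ > 0. Suppose Σ_{n=1}^m (a_n/(μ+λ_n))² ≤ 1/(8π√μ). Then for all c = (c₁,…,c_m) ≠ 0, (Σ_n c_n a_n)² / ((Σ_n λ_n c_n²)^{1/2} (Σ_n λ_n² c_n²)^{1/2}) ≤ 4√μ · Σ_n (a_n/(μ+λ_n))² whenever μ = (Σ_n λ_n² c_n²)/(Σ_n λ_n c_n²) and c is a maximizer of the left-hand quotient; in particular the quotient is at most 1/(2π). -/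
noncomputable section

/-- The homogeneous spectral quotient
`Q(c) = (Σ cₙaₙ)² / ((Σ λₙcₙ²)^{1/2} (Σ λₙ²cₙ²)^{1/2})`. -/
def specQuot (m : ℕ) (lam a c : Fin m → ℝ) : ℝ :=
  (∑ n, c n * a n) ^ 2 /
    (Real.sqrt (∑ n, lam n * c n ^ 2) * Real.sqrt (∑ n, lam n ^ 2 * c n ^ 2))

theorem spectral_quotient_max_bound (m : ℕ) (lam a : Fin m → ℝ)
    (hlam : ∀ n, 0 < lam n) (μ : ℝ) (hμ : 0 < μ)
    (hsum : ∑ n, (a n / (μ + lam n)) ^ 2 ≤ 1 / (8 * Real.pi * Real.sqrt μ)) :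
    ∀ c : Fin m → ℝ, c ≠ 0 →
      μ = (∑ n, lam n ^ 2 * c n ^ 2) / (∑ n, lam n * c n ^ 2) →
      (∀ d : Fin m → ℝ, d ≠ 0 → specQuot m lam a d ≤ specQuot m lam a c) →
      specQuot m lam a c ≤ 4 * Real.sqrt μ * ∑ n, (a n / (μ + lam n)) ^ 2 ∧
        specQuot m lam a c ≤ 1 / (2 * Real.pi) := by
  intro c hc hμc hmax
  classical
  set S1 := ∑ n, lam n * c n ^ 2 with hS1def
  set S2 := ∑ n, lam n ^ 2 * c n ^ 2 with hS2def
  set S := ∑ n, c n * a n with hSdef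
  obtain ⟨k₀, hk₀⟩ : ∃ k, c k ≠ 0 := Function.ne_iff.mp hc
  have hS1 : 0 < S1 := by
    apply Finset.sum_pos' (fun k _ => mul_nonneg (hlam k).le (sq_nonneg _))
    exact ⟨k₀, Finset.mem_univ _,
      mul_pos (hlam k₀) (pow_pos (abs_pos.mpr hk₀) 2 |>.trans_eq (by rw [sq_abs]))⟩
  have hS2 : 0 < S2 := by
    apply Finset.sum_pos' (fun k _ => mul_nonneg (sq_nonneg _) (sq_nonneg _))
    exact ⟨k₀, Finset.mem_univ _, mul_pos (pow_pos (hlam k₀) 2)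
      (pow_pos (abs_pos.mpr hk₀) 2 |>.trans_eq (by rw [sq_abs]))⟩
  set u := Real.sqrt S1 with hudef
  set v := Real.sqrt S2 with hvdef
  have hu : 0 < u := Real.sqrt_pos.mpr hS1
  have hv : 0 < v := Real.sqrt_pos.mpr hS2
  have hu2 : u ^ 2 = S1 := Real.sq_sqrt hS1.le
  have hv2 : v ^ 2 = S2 := Real.sq_sqrt hS2.le
  have hT : (0:ℝ) ≤ ∑ n, (a n / (μ + lam n)) ^ 2 := by positivity
  have hμs : 0 < Real.sqrt μ := Real.sqrt_pos.mpr hμ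
  -- Stationarity at the maximizer
  have key : ∀ n, 2 * a n * S * S1 * S2
      = S ^ 2 * (lam n * c n * S2 + lam n ^ 2 * c n * S1) := by
    intro n
    set q1 := lam n * c n with hq1def
    set q2 := lam n ^ 2 * c n with hq2def
    have sum1 : ∀ t : ℝ,
        ∑ k, (c k + t * (if k = n then (1:ℝ) else 0)) * a k = S + a n * t := by
      intro t
      have h : ∀ k ∈ Finset.univ,
          (c k + t * (if k = n then (1:ℝ) else 0)) * a k
            = c k * a k + (if k = n then a n * t else 0) := by
        intro k _; by_cases h : k = n <;> simp [h] <;> ring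
      rw [Finset.sum_congr rfl h, Finset.sum_add_distrib,
        Finset.sum_ite_eq' Finset.univ n]
      simp [hSdef]
    have sum2 : ∀ (w : Fin m → ℝ) (t : ℝ),
        ∑ k, w k * (c k + t * (if k = n then (1:ℝ) else 0)) ^ 2
          = (∑ k, w k * c k ^ 2) + 2 * (w n * c n) * t + w n * t ^ 2 := by
      intro w t
      have h : ∀ k ∈ Finset.univ,
          w k * (c k + t * (if k = n then (1:ℝ) else 0)) ^ 2
            = w k * c k ^ 2 + (if k = n then 2 * (w n * c n) * t + w n * t ^ 2 else 0) := by
        intro k _; by_cases h : k = n <;> simp [h] <;> ring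
      rw [Finset.sum_congr rfl h, Finset.sum_add_distrib,
        Finset.sum_ite_eq' Finset.univ n]
      simp; ring
    set g1 : ℝ → ℝ := fun t => S1 + 2 * q1 * t + lam n * t ^ 2 with hg1def
    set g2 : ℝ → ℝ := fun t => S2 + 2 * q2 * t + lam n ^ 2 * t ^ 2 with hg2def
    set F : ℝ → ℝ := fun t => (S + a n * t) ^ 2 / (Real.sqrt (g1 t) * Real.sqrt (g2 t))
      with hFdef
    have hF : ∀ t : ℝ,
        specQuot m lam a (fun k => c k + t * (if k = n then (1:ℝ) else 0)) = F t := by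
      intro t
      unfold specQuot
      rw [sum1 t, sum2 lam t, sum2 (fun k => lam k ^ 2) t]
    have hF0 : F 0 = specQuot m lam a c := by
      have : (fun k => c k + (0:ℝ) * (if k = n then (1:ℝ) else 0)) = c := by
        funext k; ring
      rw [← hF 0, this]
    have hloc : IsLocalMax F 0 := by
      have hball := Metric.ball_mem_nhds (0:ℝ) (abs_pos.mpr hk₀)
      filter_upwards [hball] with t ht
      have ht' : |t| < |c k₀| := by
        simpa [Real.dist_eq] using ht
      rw [← hF t, hF0]
      apply hmax
      intro h0
      have h0' := congrFun h0 k₀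
      simp only [Pi.zero_apply] at h0'
      by_cases hkn : k₀ = n
      · subst hkn
        simp at h0'
        have : t = -c k₀ := by linarith
        rw [this, abs_neg] at ht'
        exact lt_irrefl _ ht'
      · simp [hkn] at h0'
        exact hk₀ h0'
    -- derivative of F at 0
    have hg1' : HasDerivAt g1 (2 * q1) 0 := by
      have h1 : HasDerivAt (fun t : ℝ => S1 + 2 * q1 * t + lam n * t ^ 2)
          (0 + 2 * q1 * 1 + lam n * (2 * 0 ^ 1)) 0 := by
        exact ((hasDerivAt_const 0 S1).add ((hasDerivAt_id 0).const_mul (2 * q1))).add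
          ((hasDerivAt_pow 2 0).const_mul (lam n))
      simpa using h1
    have hg2' : HasDerivAt g2 (2 * q2) 0 := by
      have h1 : HasDerivAt (fun t : ℝ => S2 + 2 * q2 * t + lam n ^ 2 * t ^ 2)
          (0 + 2 * q2 * 1 + lam n ^ 2 * (2 * 0 ^ 1)) 0 := by
        exact ((hasDerivAt_const 0 S2).add ((hasDerivAt_id 0).const_mul (2 * q2))).add
          ((hasDerivAt_pow 2 0).const_mul (lam n ^ 2))
      simpa using h1
    have hg10 : g1 0 = S1 := by simp [hg1def]
    have hg20 : g2 0 = S2 := by simp [hg2def]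
    have hs1 : HasDerivAt (fun t => Real.sqrt (g1 t)) (2 * q1 / (2 * u)) 0 := by
      have := hg1'.sqrt (by rw [hg10]; exact hS1.ne')
      rwa [hg10] at this
    have hs2 : HasDerivAt (fun t => Real.sqrt (g2 t)) (2 * q2 / (2 * v)) 0 := by
      have := hg2'.sqrt (by rw [hg20]; exact hS2.ne')
      rwa [hg20] at this
    have hD : HasDerivAt (fun t => Real.sqrt (g1 t) * Real.sqrt (g2 t))
        (2 * q1 / (2 * u) * v + u * (2 * q2 / (2 * v))) 0 := by
      have := hs1.fun_mul hs2
      simpa [hg10, hg20, ← hudef, ← hvdef] using this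
    have hN : HasDerivAt (fun t : ℝ => (S + a n * t) ^ 2) (2 * S * a n) 0 := by
      have hlin : HasDerivAt (fun t : ℝ => S + a n * t) (a n) 0 := by
        simpa using (hasDerivAt_const (0:ℝ) S).fun_add ((hasDerivAt_id 0).const_mul (a n))
      have := hlin.fun_pow 2
      simpa using this
    have hden0 : u * v ≠ 0 := (mul_pos hu hv).ne'
    have hFd : HasDerivAt F
        ((2 * S * a n * (u * v) - (S + a n * 0) ^ 2 *
          (2 * q1 / (2 * u) * v + u * (2 * q2 / (2 * v)))) / (u * v) ^ 2) 0 := by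
      have := hN.fun_div hD (by simpa [hg10, hg20] using hden0)
      simpa [hg10, hg20, ← hudef, ← hvdef] using this
    have hzero := hloc.hasDerivAt_eq_zero hFd
    have hnum : 2 * S * a n * (u * v) - S ^ 2 *
        (2 * q1 / (2 * u) * v + u * (2 * q2 / (2 * v))) = 0 := by
      have h2 : ((2 * S * a n * (u * v) - (S + a n * 0) ^ 2 *
          (2 * q1 / (2 * u) * v + u * (2 * q2 / (2 * v)))) / (u * v) ^ 2) * (u * v) ^ 2
          = 0 := by rw [hzero]; ring
      rw [div_mul_cancel₀ _ (by positivity)] at h2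
      simpa using h2
    -- clear denominators
    have hq : 2 * S * a n * (u * v) * (u * v)
        = S ^ 2 * (q1 * v ^ 2 + q2 * u ^ 2) := by
      have hE : (2 * q1 / (2 * u) * v + u * (2 * q2 / (2 * v))) * (u * v)
          = q1 * v ^ 2 + q2 * u ^ 2 := by
        field_simp
      have h2 : 2 * S * a n * (u * v)
          = S ^ 2 * (2 * q1 / (2 * u) * v + u * (2 * q2 / (2 * v))) := by
        linarith [hnum]
      rw [h2, mul_assoc, hE]
    rw [hu2, hv2] at hq
    rw [hq1def, hq2def] at hq
    have huv : u * v * (u * v) = S1 * S2 := by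
      rw [show u * v * (u * v) = u ^ 2 * v ^ 2 from by ring, hu2, hv2]
    linear_combination hq - (2 * S * a n) * huv
  -- now the algebra
  have hQ : specQuot m lam a c = S ^ 2 / (u * v) := rfl
  by_cases hS : S = 0
  · constructor
    · rw [hQ, hS]
      simp
      positivity
    · rw [hQ, hS]
      simp
      positivity
  · have hμ' : μ = S2 / S1 := hμc
    have hratio : ∀ n, a n / (μ + lam n) = S * (lam n * c n) / (2 * S2) := by
      intro n
      have hk' : a n * S1 * (2 * S2) = S * (lam n * c n) * (S2 + lam n * S1) := by
        apply mul_left_cancel₀ hS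
        linear_combination key n
      have hden : μ + lam n = (S2 + lam n * S1) / S1 := by
        rw [hμ']; field_simp
      have hpos2 : 0 < S2 + lam n * S1 := add_pos hS2 (mul_pos (hlam n) hS1)
      rw [hden, div_div_eq_mul_div, div_eq_div_iff hpos2.ne' (mul_pos two_pos hS2).ne']
      linear_combination hk'
    have hsumval : (∑ n, (a n / (μ + lam n)) ^ 2) = S ^ 2 / (4 * S2) := by
      rw [Finset.sum_congr rfl (fun n _ => by rw [hratio n])]
      have : ∀ n ∈ Finset.univ, (S * (lam n * c n) / (2 * S2)) ^ 2
          = S ^ 2 / (4 * S2 ^ 2) * (lam n ^ 2 * c n ^ 2) := by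
        intro n _; field_simp; ring
      rw [Finset.sum_congr rfl this, ← Finset.mul_sum, ← hS2def]
      field_simp
    have hsqrtμ : Real.sqrt μ = v / u := by
      rw [hμ', Real.sqrt_div hS2.le]
    have heq : specQuot m lam a c = 4 * Real.sqrt μ * ∑ n, (a n / (μ + lam n)) ^ 2 := by
      rw [hQ, hsumval, hsqrtμ, ← hv2]
      field_simp
    refine ⟨le_of_eq heq, ?_⟩
    calc specQuot m lam a c
        = 4 * Real.sqrt μ * ∑ n, (a n / (μ + lam n)) ^ 2 := heq
      _ ≤ 4 * Real.sqrt μ * (1 / (8 * Real.pi * Real.sqrt μ)) := by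
          exact mul_le_mul_of_nonneg_left hsum (by positivity)
      _ = 1 / (2 * Real.pi) := by
          have h1 : Real.sqrt μ ≠ 0 := hμs.ne'
          have h2 : Real.pi ≠ 0 := Real.pi_ne_zero
          field_simp
          ring
end
end

section
/- Let u : ℝ³ → ℝ with u ∈ H¹₀(Ω), Δu ∈ L²(Ω), and suppose sup_Ω|u| ≤ (2π)^{-1/2}‖∇u‖^{1/2}‖Δu‖^{1/2}. Then for a vector field u ∈ (H¹₀(Ω))³ with Δu ∈ L²(Ω)³, |∫_Ω (u·∇)u · Δu dx| ≤ (2π)^{-1/2} ‖∇u‖^{3/2} ‖Δu‖^{3/2}. -/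
open MeasureTheory Filter

noncomputable section

/-- `φ` is a smooth compactly supported test function with support inside `Ω`. -/
def IsTestOn (Ω : Set E3) (φ : E3 → ℝ) : Prop :=
  ContDiff ℝ (⊤ : ℕ∞) φ ∧ HasCompactSupport φ ∧ tsupport φ ⊆ Ω

/-- `u ∈ H¹₀(Ω)`: there are test functions on `Ω` converging to `u` in `L²`
whose gradients converge to `∇u` in `L²`. -/
def MemH10 (Ω : Set E3) (u : E3 → ℝ) : Prop :=
  ∃ φ : ℕ → E3 → ℝ, (∀ n, IsTestOn Ω (φ n)) ∧
    Tendsto (fun n => ∫ x, |φ n x - u x| ^ 2) atTop (nhds 0) ∧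
    Tendsto (fun n => ∫ x, ‖gradient (φ n) x - gradient u x‖ ^ 2) atTop (nhds 0)

/-- `∫_Ω |∇u|² dx` for a vector field `u` with components `u i`. -/
def gradNormSq (Ω : Set E3) (u : Fin 3 → E3 → ℝ) : ℝ :=
  ∫ x in Ω, ∑ i, ‖gradient (u i) x‖ ^ 2

/-- `∫_Ω |Δu|² dx` for a vector field `u` with components `u i`. -/
def lapNormSq (Ω : Set E3) (u : Fin 3 → E3 → ℝ) : ℝ :=
  ∫ x in Ω, ∑ i, (lap (u i) x) ^ 2

/-- The convective trilinear term `∫_Ω (u·∇)u · Δu dx`. -/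
def convTerm (Ω : Set E3) (u : Fin 3 → E3 → ℝ) : ℝ :=
  ∫ x in Ω, ∑ i, (∑ j, u j x * fderiv ℝ (u i) x (EuclideanSpace.single j 1)) * lap (u i) x

/-- The derivative in a coordinate direction is the corresponding gradient coordinate. -/
lemma fderiv_eq_gradient_coord (f : E3 → ℝ) (x : E3) (j : Fin 3) :
    fderiv ℝ f x (EuclideanSpace.single j 1) = gradient f x j := by
  have h : (inner ℝ (gradient f x) (EuclideanSpace.single j (1 : ℝ)) : ℝ)
      = fderiv ℝ f x (EuclideanSpace.single j 1) := by
    unfold gradient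
    exact InnerProductSpace.toDual_symm_apply
  rw [← h, EuclideanSpace.inner_single_right]
  simp

theorem convective_term_bound (Ω : Set E3) (hΩ : IsOpen Ω) (u : Fin 3 → E3 → ℝ)
    (hmem : ∀ i, MemH10 Ω (u i))
    (hlapL2 : ∀ i, MemLp (lap (u i)) 2 (volume.restrict Ω))
    (hsup : ∀ᵐ x ∂(volume.restrict Ω),
      Real.sqrt (∑ i, (u i x) ^ 2) ≤ (Real.sqrt (2 * Real.pi))⁻¹ *
        ((gradNormSq Ω u) ^ ((1 : ℝ)/4) * (lapNormSq Ω u) ^ ((1 : ℝ)/4))) :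
    |convTerm Ω u| ≤ (Real.sqrt (2 * Real.pi))⁻¹ *
      ((gradNormSq Ω u) ^ ((3 : ℝ)/4) * (lapNormSq Ω u) ^ ((3 : ℝ)/4)) := by
  classical
  set μ := volume.restrict Ω with hμ
  set c : ℝ := (Real.sqrt (2 * Real.pi))⁻¹ with hc
  have hc0 : 0 ≤ c := inv_nonneg.2 (Real.sqrt_nonneg _)
  set g := gradNormSq Ω u with hgdef
  set l := lapNormSq Ω u with hldef
  have hg0 : 0 ≤ g := integral_nonneg fun x => Finset.sum_nonneg fun i _ => by positivity
  have hl0 : 0 ≤ l := integral_nonneg fun x => Finset.sum_nonneg fun i _ => by positivity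
  set F : E3 → ℝ := fun x =>
    ∑ i, (∑ j, u j x * fderiv ℝ (u i) x (EuclideanSpace.single j 1)) * lap (u i) x with hFdef
  have hconv : convTerm Ω u = ∫ x, F x ∂μ := rfl
  set G : E3 → ℝ := fun x => ∑ i, ‖gradient (u i) x‖ ^ 2 with hGdef
  set L : E3 → ℝ := fun x => ∑ i, (lap (u i) x) ^ 2 with hLdef
  have hG0 : ∀ x, 0 ≤ G x := fun x => Finset.sum_nonneg fun i _ => by positivity
  have hL0 : ∀ x, 0 ≤ L x := fun x => Finset.sum_nonneg fun i _ => by positivity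
  -- pointwise bound
  have hpt : ∀ x, |F x| ≤ Real.sqrt (∑ i, (u i x) ^ 2) *
      (Real.sqrt (G x) * Real.sqrt (L x)) := by
    intro x
    set s := Real.sqrt (∑ i, (u i x) ^ 2) with hs
    have hs0 : 0 ≤ s := Real.sqrt_nonneg _
    have hai : ∀ i, |∑ j, u j x * fderiv ℝ (u i) x (EuclideanSpace.single j 1)| ≤
        s * ‖gradient (u i) x‖ := by
      intro i
      calc |∑ j, u j x * fderiv ℝ (u i) x (EuclideanSpace.single j 1)|
          ≤ ∑ j, |u j x * fderiv ℝ (u i) x (EuclideanSpace.single j 1)| :=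
            Finset.abs_sum_le_sum_abs _ _
        _ = ∑ j, |u j x| * |gradient (u i) x j| := by
            simp_rw [abs_mul, fderiv_eq_gradient_coord]
        _ ≤ Real.sqrt (∑ j, |u j x| ^ 2) * Real.sqrt (∑ j, |gradient (u i) x j| ^ 2) :=
            Real.sum_mul_le_sqrt_mul_sqrt _ _ _
        _ = s * ‖gradient (u i) x‖ := by
            rw [hs, EuclideanSpace.norm_eq]
            simp [sq_abs, Real.norm_eq_abs]
    calc |F x| ≤ ∑ i, |(∑ j, u j x * fderiv ℝ (u i) x (EuclideanSpace.single j 1)) *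
          lap (u i) x| := Finset.abs_sum_le_sum_abs _ _
      _ ≤ ∑ i, (s * ‖gradient (u i) x‖) * |lap (u i) x| := by
          refine Finset.sum_le_sum fun i _ => ?_
          rw [abs_mul]
          exact mul_le_mul_of_nonneg_right (hai i) (abs_nonneg _)
      _ = s * ∑ i, ‖gradient (u i) x‖ * |lap (u i) x| := by
          rw [Finset.mul_sum]; simp_rw [mul_assoc]
      _ ≤ s * (Real.sqrt (∑ i, ‖gradient (u i) x‖ ^ 2) *
            Real.sqrt (∑ i, |lap (u i) x| ^ 2)) := by
          refine mul_le_mul_of_nonneg_left ?_ hs0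
          exact Real.sum_mul_le_sqrt_mul_sqrt _ _ _
      _ = s * (Real.sqrt (G x) * Real.sqrt (L x)) := by simp_rw [sq_abs]; rfl
  set M : ℝ := c * (g ^ ((1 : ℝ)/4) * l ^ ((1 : ℝ)/4)) with hM
  by_cases hdeg : g = 0 ∨ l = 0
  · -- degenerate case: u = 0 a.e. on Ω
    have hM0 : M = 0 := by
      rcases hdeg with h | h <;>
        simp [hM, h, Real.zero_rpow (by norm_num : (1 : ℝ)/4 ≠ 0)]
    have hu0 : ∀ᵐ x ∂μ, ∀ j, u j x = 0 := by
      filter_upwards [hsup] with x hx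
      rw [hM0] at hx
      have hsum : ∑ i, (u i x) ^ 2 = 0 := by
        have h1 : Real.sqrt (∑ i, (u i x) ^ 2) = 0 :=
          le_antisymm hx (Real.sqrt_nonneg _)
        have h2 : 0 ≤ ∑ i, (u i x) ^ 2 := Finset.sum_nonneg fun i _ => sq_nonneg _
        nlinarith [Real.sq_sqrt h2]
      intro j
      have := (Finset.sum_eq_zero_iff_of_nonneg fun i _ => sq_nonneg (u i x)).1 hsum j
        (Finset.mem_univ j)
      exact pow_eq_zero_iff (n := 2) (by norm_num) |>.1 this
    have hF0 : ∀ᵐ x ∂μ, F x = 0 := by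
      filter_upwards [hu0] with x hx
      simp only [hFdef]
      refine Finset.sum_eq_zero fun i _ => ?_
      have : (∑ j, u j x * fderiv ℝ (u i) x (EuclideanSpace.single j 1)) = 0 :=
        Finset.sum_eq_zero fun j _ => by rw [hx j, zero_mul]
      rw [this, zero_mul]
    have : convTerm Ω u = 0 := by
      rw [hconv, integral_congr_ae (g := fun _ => (0 : ℝ)) hF0, integral_zero]
    rw [this, abs_zero]
    have : 0 ≤ g ^ ((3 : ℝ)/4) * l ^ ((3 : ℝ)/4) :=
      mul_nonneg (Real.rpow_nonneg hg0 _) (Real.rpow_nonneg hl0 _)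
    positivity
  · push_neg at hdeg
    have hgpos : 0 < g := lt_of_le_of_ne hg0 (Ne.symm hdeg.1)
    have hlpos : 0 < l := lt_of_le_of_ne hl0 (Ne.symm hdeg.2)
    -- G and L are integrable on Ω (else the integrals would be 0)
    have hGint : Integrable G μ := by
      by_contra h
      exact hdeg.1 (by rw [hgdef, gradNormSq, ← hμ, integral_undef h])
    have hLint : Integrable L μ := by
      by_contra h
      exact hdeg.2 (by rw [hldef, lapNormSq, ← hμ, integral_undef h])
    -- measurability
    have hmeasgrad : ∀ i, Measurable fun x => gradient (u i) x := by
      intro i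
      have : Measurable fun x => fderiv ℝ (u i) x := measurable_fderiv ℝ (u i)
      exact ((InnerProductSpace.toDual ℝ E3).symm.continuous.measurable).comp this
    have hmeaslap : ∀ i, Measurable (lap (u i)) := by
      intro i
      exact Finset.measurable_sum _ fun k _ =>
        measurable_fderiv_apply_const ℝ _ _
    set h1 : E3 → ℝ := fun x => Real.sqrt (G x) with hh1def
    set h2 : E3 → ℝ := fun x => Real.sqrt (L x) with hh2def
    have hmeash1 : Measurable h1 := by
      apply Real.continuous_sqrt.measurable.comp
      exact Finset.measurable_sum _ fun i _ => ((hmeasgrad i).norm.pow_const 2)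
    have hmeash2 : Measurable h2 := by
      apply Real.continuous_sqrt.measurable.comp
      exact Finset.measurable_sum _ fun i _ => ((hmeaslap i).pow_const 2)
    have h1sq : ∀ x, h1 x ^ 2 = G x := fun x => Real.sq_sqrt (hG0 x)
    have h2sq : ∀ x, h2 x ^ 2 = L x := fun x => Real.sq_sqrt (hL0 x)
    have hh1 : MemLp h1 2 μ := by
      rw [memLp_two_iff_integrable_sq hmeash1.aestronglyMeasurable]
      simpa only [h1sq] using hGint
    have hh2 : MemLp h2 2 μ := by
      rw [memLp_two_iff_integrable_sq hmeash2.aestronglyMeasurable]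
      simpa only [h2sq] using hLint
    have hmul : Integrable (fun x => h1 x * h2 x) μ := by
      have hpqr : (1 : ENNReal)/1 = 1/2 + 1/2 := by
        rw [ENNReal.div_add_div_same, div_one, one_add_one_eq_two]
        exact (ENNReal.div_self (by norm_num) (by norm_num)).symm
      have := memLp_one_iff_integrable.1 (hh1.smul hh2 (r := 1))
      simpa [Pi.smul_apply, smul_eq_mul, mul_comm, Pi.mul_def] using this
    -- main estimate
    have step1 : |∫ x, F x ∂μ| ≤ ∫ x, M * (h1 x * h2 x) ∂μ := by
      calc |∫ x, F x ∂μ| ≤ ∫ x, ‖F x‖ ∂μ := norm_integral_le_integral_norm F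
        _ ≤ ∫ x, M * (h1 x * h2 x) ∂μ := by
            refine integral_mono_of_nonneg (Eventually.of_forall fun x => norm_nonneg _)
              (hmul.const_mul M) ?_
            filter_upwards [hsup] with x hx
            have := hpt x
            rw [Real.norm_eq_abs]
            calc |F x| ≤ Real.sqrt (∑ i, (u i x) ^ 2) * (h1 x * h2 x) := this
              _ ≤ M * (h1 x * h2 x) := by
                  refine mul_le_mul_of_nonneg_right ?_
                    (mul_nonneg (Real.sqrt_nonneg _) (Real.sqrt_nonneg _))
                  exact hx
    have step2 : ∫ x, h1 x * h2 x ∂μ ≤ g ^ ((1 : ℝ)/2) * l ^ ((1 : ℝ)/2) := by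
      have hpq : (2 : ℝ).HolderConjugate 2 := Real.HolderConjugate.two_two
      have h := integral_mul_le_Lp_mul_Lq_of_nonneg hpq
        (Eventually.of_forall fun x => Real.sqrt_nonneg _)
        (Eventually.of_forall fun x => Real.sqrt_nonneg _)
        (by simpa using hh1) (by simpa using hh2)
      have hrpow : ∀ y : ℝ, 0 ≤ y → Real.sqrt y ^ (2 : ℝ) = y := by
        intro y hy
        rw [show (2 : ℝ) = ((2 : ℕ) : ℝ) by norm_num, Real.rpow_natCast]
        exact Real.sq_sqrt hy
      have e1 : (∫ a, Real.sqrt (G a) ^ (2 : ℝ) ∂μ) = g := by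
        rw [hgdef, gradNormSq, ← hμ]
        exact integral_congr_ae (Eventually.of_forall fun x => hrpow _ (hG0 x))
      have e2 : (∫ a, Real.sqrt (L a) ^ (2 : ℝ) ∂μ) = l := by
        rw [hldef, lapNormSq, ← hμ]
        exact integral_congr_ae (Eventually.of_forall fun x => hrpow _ (hL0 x))
      rw [e1, e2] at h
      exact h
    have hhalf : 0 ≤ ∫ x, h1 x * h2 x ∂μ :=
      integral_nonneg fun x => mul_nonneg (Real.sqrt_nonneg _) (Real.sqrt_nonneg _)
    have hM0 : 0 ≤ M :=
      mul_nonneg hc0 (mul_nonneg (Real.rpow_nonneg hg0 _) (Real.rpow_nonneg hl0 _))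
    calc |convTerm Ω u| = |∫ x, F x ∂μ| := by rw [hconv]
      _ ≤ ∫ x, M * (h1 x * h2 x) ∂μ := step1
      _ = M * ∫ x, h1 x * h2 x ∂μ := integral_const_mul M _
      _ ≤ M * (g ^ ((1 : ℝ)/2) * l ^ ((1 : ℝ)/2)) :=
          mul_le_mul_of_nonneg_left step2 hM0
      _ = c * ((g ^ ((1 : ℝ)/4) * g ^ ((1 : ℝ)/2)) * (l ^ ((1 : ℝ)/4) * l ^ ((1 : ℝ)/2))) := by
          rw [hM]; ring
      _ = c * (g ^ ((3 : ℝ)/4) * l ^ ((3 : ℝ)/4)) := by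
          rw [← Real.rpow_add hgpos, ← Real.rpow_add hlpos]
          norm_num
end
end
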